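/- arXiv:2406.03255 — 4 statements merged into one kernel-verified Lean document; each statement's English description precedes it below -/
import Mathlib

section
/- If g : [0,1] → ℝ≥0 is L-Lipschitz, g(a) = g(b) = 0 for 0 ≤ a < b ≤ 1, and h = max_{ŷ∈[a,b]} g(ŷ), then ∫_a^b g(ŷ) dŷ ≤ (b − a − h/L) · h. -/
open Set

theorem integral_le_trapezoid
    (g : ℝ → ℝ) (L : ℝ) (hL : 0 < L) (a b : ℝ)
    (ha : 0 ≤ a) (hab : a < b) (hb : b ≤ 1)
    (hnonneg : ∀ x ∈ Icc (0:ℝ) 1, 0 ≤ g x)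
    (hlip : ∀ x ∈ Icc (0:ℝ) 1, ∀ z ∈ Icc (0:ℝ) 1, |g x - g z| ≤ L * |x - z|)
    (hga : g a = 0) (hgb : g b = 0)
    (h : ℝ) (hmax : IsGreatest (g '' Icc a b) h) :
    ∫ x in a..b, g x ≤ (b - a - h / L) * h := by
  have hsub : Icc a b ⊆ Icc (0:ℝ) 1 := Icc_subset_Icc ha hb
  have hamem : a ∈ Icc (0:ℝ) 1 := ⟨ha, le_trans hab.le hb⟩
  have hbmem : b ∈ Icc (0:ℝ) 1 := ⟨le_trans ha hab.le, hb⟩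
  have hub : ∀ x ∈ Icc a b, g x ≤ h := fun x hx => hmax.2 ⟨x, hx, rfl⟩
  have h0 : 0 ≤ h := by
    have := hmax.2 ⟨a, ⟨le_refl a, hab.le⟩, rfl⟩
    rwa [hga] at this
  have hleft : ∀ x ∈ Icc a b, g x ≤ L * (x - a) := by
    intro x hx
    have := hlip x (hsub hx) a hamem
    rw [hga, sub_zero] at this
    calc g x ≤ |g x| := le_abs_self _
      _ ≤ L * |x - a| := this
      _ = L * (x - a) := by rw [abs_of_nonneg (by linarith [hx.1])]
  have hright : ∀ x ∈ Icc a b, g x ≤ L * (b - x) := by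
    intro x hx
    have := hlip x (hsub hx) b hbmem
    rw [hgb, sub_zero] at this
    calc g x ≤ |g x| := le_abs_self _
      _ ≤ L * |x - b| := this
      _ = L * (b - x) := by rw [abs_sub_comm, abs_of_nonneg (by linarith [hx.2])]
  have h2h : 2 * h ≤ L * (b - a) := by
    obtain ⟨x₀, hx₀, hgx₀⟩ := hmax.1
    have h1 := hleft x₀ hx₀
    have h2 := hright x₀ hx₀
    rw [hgx₀] at h1 h2
    linarith
  set c := a + h / L with hc
  set d := b - h / L with hd
  have hhL : 0 ≤ h / L := div_nonneg h0 hL.le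
  have hac : a ≤ c := by simp [hc]; linarith
  have hdb : d ≤ b := by simp [hd]; linarith
  have hcd : c ≤ d := by
    have : h / L + h / L ≤ b - a := by
      rw [← add_div]
      rw [div_le_iff₀ hL]
      linarith
    simp [hc, hd]; linarith
  -- continuity of g on Icc a b
  have hlipOn : LipschitzOnWith (Real.toNNReal L) g (Icc (0:ℝ) 1) := by
    intro x hx z hz
    rw [edist_dist, edist_dist]
    have : dist (g x) (g z) ≤ L * dist x z := by
      rw [Real.dist_eq, Real.dist_eq]; exact hlip x hx z hz
    calc ENNReal.ofReal (dist (g x) (g z)) ≤ ENNReal.ofReal (L * dist x z) :=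
          ENNReal.ofReal_le_ofReal this
      _ = ENNReal.ofReal L * ENNReal.ofReal (dist x z) := by
          rw [ENNReal.ofReal_mul hL.le]
      _ = ↑L.toNNReal * ENNReal.ofReal (dist x z) := rfl
  have hcont : ContinuousOn g (Icc a b) := (hlipOn.continuousOn).mono hsub
  have hint : ∀ p q, a ≤ p → p ≤ q → q ≤ b → IntervalIntegrable g MeasureTheory.volume p q := by
    intro p q hp hpq hq
    apply ContinuousOn.intervalIntegrable
    apply hcont.mono
    rw [uIcc_of_le hpq]
    exact Icc_subset_Icc hp hq
  have hIac : IntervalIntegrable g MeasureTheory.volume a c := hint a c le_rfl hac (le_trans hcd hdb)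
  have hIcd : IntervalIntegrable g MeasureTheory.volume c d := hint c d hac hcd hdb
  have hIdb : IntervalIntegrable g MeasureTheory.volume d b := hint d b (le_trans hac hcd) hdb le_rfl
  have hsplit : ∫ x in a..b, g x = (∫ x in a..c, g x) + (∫ x in c..d, g x) + (∫ x in d..b, g x) := by
    have e1 := intervalIntegral.integral_add_adjacent_intervals hIac hIcd
    have e2 := intervalIntegral.integral_add_adjacent_intervals (hIac.trans hIcd) hIdb
    linarith
  have hB1 : (∫ x in a..c, g x) ≤ ∫ x in a..c, L * (x - a) := by
    apply intervalIntegral.integral_mono_on hac hIac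
    · exact (Continuous.intervalIntegrable (by continuity) a c)
    · intro x hx
      exact hleft x ⟨hx.1, le_trans hx.2 (le_trans hcd hdb)⟩
  have hB2 : (∫ x in c..d, g x) ≤ ∫ x in c..d, (h:ℝ) := by
    apply intervalIntegral.integral_mono_on hcd hIcd
    · exact intervalIntegrable_const
    · intro x hx
      exact hub x ⟨le_trans hac hx.1, le_trans hx.2 hdb⟩
  have hB3 : (∫ x in d..b, g x) ≤ ∫ x in d..b, L * (b - x) := by
    apply intervalIntegral.integral_mono_on hdb hIdb
    · exact (Continuous.intervalIntegrable (by continuity) d b)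
    · intro x hx
      exact hright x ⟨le_trans (le_trans hac hcd) hx.1, hx.2⟩
  have hV1 : (∫ x in a..c, L * (x - a)) = L * (c - a) ^ 2 / 2 := by
    have : (∫ x in a..c, L * (x - a)) = L * ∫ x in a..c, (x - a) := by
      rw [intervalIntegral.integral_const_mul]
    rw [this]
    rw [intervalIntegral.integral_comp_sub_right (fun u => u) a]
    simp only [integral_id]
    ring
  have hV3 : (∫ x in d..b, L * (b - x)) = L * (b - d) ^ 2 / 2 := by
    have : (∫ x in d..b, L * (b - x)) = L * ∫ x in d..b, (b - x) := by
      rw [intervalIntegral.integral_const_mul]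
    rw [this]
    have : (∫ x in d..b, (b - x)) = ∫ x in b - b..b - d, x :=
      intervalIntegral.integral_comp_sub_left (fun u => u) b
    rw [this]
    simp only [integral_id, sub_self]
    ring
  have hV2 : (∫ x in c..d, (h:ℝ)) = (d - c) * h := by
    simp [smul_eq_mul]
  have hca : c - a = h / L := by simp [hc]
  have hbd : b - d = h / L := by simp [hd]
  rw [hsplit]
  have : L * (c - a) ^ 2 / 2 + (d - c) * h + L * (b - d) ^ 2 / 2 = (b - a - h / L) * h := by
    rw [hca, hbd, hc, hd]
    field_simp
    ring
  have hsum := add_le_add (add_le_add hB1 hB2) hB3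
  rw [hV1, hV2, hV3] at hsum
  linarith
end

section
/- Assume ΔF : [0,1] → ℝ≥0 is continuous with Lipschitz constant L ≤ 2 and ΔF(1) = 0. Then ∫₀¹ ΔF(ŷ) dŷ ≤ MCDP(ε) + εL/2, where MCDP(ε) = max_{y₀∈[0,1]} min_{|ŷ−y₀|≤ε, ŷ∈[0,1]} ΔF(ŷ). -/
open Set

theorem abcc_le_mcdp_add
    (ΔF : ℝ → ℝ) (L ε : ℝ) (hL : L ≤ 2) (hε : 0 < ε)
    (hnonneg : ∀ x ∈ Icc (0:ℝ) 1, 0 ≤ ΔF x)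
    (hlip : ∀ x ∈ Icc (0:ℝ) 1, ∀ z ∈ Icc (0:ℝ) 1, |ΔF x - ΔF z| ≤ L * |x - z|)
    (hone : ΔF 1 = 0)
    (MCDP : ℝ → ℝ)
    (hMCDP : ∀ e : ℝ, MCDP e =
      ⨆ y₀ : Icc (0:ℝ) 1, ⨅ yh : {y : Icc (0:ℝ) 1 // |y.1 - y₀.1| ≤ e}, ΔF yh.1.1) :
    ∫ x in (0:ℝ)..1, ΔF x ≤ MCDP ε + ε * L / 2 := by
  have h01 : (0:ℝ) ∈ Icc (0:ℝ) 1 := by norm_num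
  have h11 : (1:ℝ) ∈ Icc (0:ℝ) 1 := by norm_num
  have hL0 : 0 ≤ L := by
    have := hlip 0 h01 1 h11
    have h2 : (0:ℝ) ≤ |ΔF 0 - ΔF 1| := abs_nonneg _
    have : |(0:ℝ) - 1| = 1 := by norm_num
    nlinarith [hlip 0 h01 1 h11, abs_nonneg (ΔF 0 - ΔF 1), abs_nonneg ((0:ℝ)-1)]
  -- upper bound on ΔF
  have hub : ∀ x ∈ Icc (0:ℝ) 1, ΔF x ≤ 2 := by
    intro x hx
    have h := hlip x hx 1 h11
    rw [hone, sub_zero] at h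
    have h1 : |x - 1| ≤ 1 := by rw [abs_le]; constructor <;> [linarith [hx.1]; linarith [hx.2]]
    have := le_abs_self (ΔF x)
    nlinarith
  -- continuity
  have hcont : ContinuousOn ΔF (Icc 0 1) := by
    have : LipschitzOnWith (Real.toNNReal L) ΔF (Icc 0 1) := by
      rw [lipschitzOnWith_iff_dist_le_mul]
      intro x hx y hy
      rw [Real.dist_eq, Real.dist_eq]
      calc |ΔF x - ΔF y| ≤ L * |x - y| := hlip x hx y hy
        _ ≤ (Real.toNNReal L) * |x - y| := by
            gcongr
            exact Real.le_coe_toNNReal L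
    exact this.continuousOn
  set m := MCDP ε with hmdef
  -- nonempty instances
  have hne : ∀ y₀ : Icc (0:ℝ) 1, Nonempty {y : Icc (0:ℝ) 1 // |y.1 - y₀.1| ≤ ε} :=
    fun y₀ => ⟨⟨y₀, by simp [hε.le]⟩⟩
  -- bddabove of the sup family
  have hbdd : BddAbove (range fun y₀ : Icc (0:ℝ) 1 =>
      ⨅ yh : {y : Icc (0:ℝ) 1 // |y.1 - y₀.1| ≤ ε}, ΔF yh.1.1) := by
    refine ⟨2, ?_⟩
    rintro v ⟨y₀, rfl⟩
    haveI := hne y₀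
    have hbb : BddBelow (range fun yh : {y : Icc (0:ℝ) 1 // |y.1 - y₀.1| ≤ ε} => ΔF yh.1.1) := by
      refine ⟨0, ?_⟩
      rintro w ⟨yh, rfl⟩
      exact hnonneg _ yh.1.2
    calc (⨅ yh : {y : Icc (0:ℝ) 1 // |y.1 - y₀.1| ≤ ε}, ΔF yh.1.1)
        ≤ ΔF y₀.1 := ciInf_le hbb ⟨y₀, by simp [hε.le]⟩
      _ ≤ 2 := hub _ y₀.2
  -- m ≥ 0
  have hm0 : 0 ≤ m := by
    rw [hmdef, hMCDP]
    haveI := hne ⟨0, h01⟩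
    calc (0:ℝ) ≤ ⨅ yh : {y : Icc (0:ℝ) 1 // |y.1 - (⟨0,h01⟩ : Icc (0:ℝ) 1).1| ≤ ε}, ΔF yh.1.1 :=
          le_ciInf (fun yh => hnonneg _ yh.1.2)
      _ ≤ _ := le_ciSup hbdd ⟨0, h01⟩
  -- key extraction
  have key : ∀ y₀ ∈ Icc (0:ℝ) 1, ∃ c ∈ Icc (0:ℝ) 1, |c - y₀| ≤ ε ∧ ΔF c ≤ m := by
    intro y₀ hy₀
    set K := Icc (0:ℝ) 1 ∩ Icc (y₀ - ε) (y₀ + ε) with hK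
    have hKc : IsCompact K := isCompact_Icc.inter_right isClosed_Icc
    have hKne : K.Nonempty := ⟨y₀, hy₀, by constructor <;> linarith⟩
    obtain ⟨c, hcK, hmin⟩ := hKc.exists_isMinOn hKne (hcont.mono inter_subset_left)
    refine ⟨c, hcK.1, ?_, ?_⟩
    · rw [abs_le]; exact ⟨by linarith [hcK.2.1], by linarith [hcK.2.2]⟩
    · haveI := hne ⟨y₀, hy₀⟩
      have h1 : ΔF c ≤ ⨅ yh : {y : Icc (0:ℝ) 1 // |y.1 - y₀| ≤ ε}, ΔF yh.1.1 := by
        refine le_ciInf (fun yh => ?_)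
        refine hmin ?_
        refine ⟨yh.1.2, ?_⟩
        have := yh.2
        rw [abs_le] at this
        constructor <;> linarith [this.1, this.2]
      have h2 : (⨅ yh : {y : Icc (0:ℝ) 1 // |y.1 - (⟨y₀,hy₀⟩ : Icc (0:ℝ) 1).1| ≤ ε}, ΔF yh.1.1) ≤ m := by
        rw [hmdef, hMCDP]
        exact le_ciSup hbdd ⟨y₀, hy₀⟩
      exact le_trans h1 h2
  -- integrability
  have hInt : ∀ a b : ℝ, a ∈ Icc (0:ℝ) 1 → b ∈ Icc (0:ℝ) 1 → IntervalIntegrable ΔF MeasureTheory.volume a b := by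
    intro a b ha hb
    apply ContinuousOn.intervalIntegrable
    apply hcont.mono
    exact uIcc_subset_Icc ha hb
  -- explicit integral of affine functions
  have haff : ∀ a b q r : ℝ, ∫ x in a..b, (q + r * (x - a)) = q*(b-a) + r*((b^2-a^2)/2 - a*(b-a)) := by
    intro a b q r
    have hc : Continuous (fun x : ℝ => r * (x - a)) := continuous_const.mul (continuous_id.sub continuous_const)
    have hid : Continuous (fun x : ℝ => x) := continuous_id
    rw [intervalIntegral.integral_add (intervalIntegrable_const) (hc.intervalIntegrable _ _),
      intervalIntegral.integral_const_mul,
      intervalIntegral.integral_sub (hid.intervalIntegrable _ _) intervalIntegrable_const,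
      integral_id, intervalIntegral.integral_const, intervalIntegral.integral_const]
    simp [smul_eq_mul]; ring
  have haff' : ∀ a b q r : ℝ, ∫ x in a..b, (q + r * (b - x)) = q*(b-a) + r*(b*(b-a) - (b^2-a^2)/2) := by
    intro a b q r
    have hc : Continuous (fun x : ℝ => r * (b - x)) := continuous_const.mul (continuous_const.sub continuous_id)
    have hid : Continuous (fun x : ℝ => x) := continuous_id
    rw [intervalIntegral.integral_add (intervalIntegrable_const) (hc.intervalIntegrable _ _),
      intervalIntegral.integral_const_mul,
      intervalIntegral.integral_sub intervalIntegrable_const (hid.intervalIntegrable _ _),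
      integral_id, intervalIntegral.integral_const, intervalIntegral.integral_const]
    simp [smul_eq_mul]; ring
  -- tent bound: if ΔF c' ≤ m, ΔF c ≤ m, c' ≤ c, both in [0,1], then
  -- ∫ x in c'..c, ΔF x ≤ m*(c-c') + L*(c-c')^2/4
  have tent : ∀ c' c : ℝ, c' ∈ Icc (0:ℝ) 1 → c ∈ Icc (0:ℝ) 1 → c' ≤ c →
      ΔF c' ≤ m → ΔF c ≤ m →
      ∫ x in c'..c, ΔF x ≤ m*(c-c') + L*(c-c')^2/4 := by
    intro c' c hc' hc hle hm1 hm2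
    set mid := (c' + c)/2 with hmid
    have hmid1 : mid ∈ Icc (0:ℝ) 1 := ⟨by simp [hmid]; linarith [hc'.1, hc.1], by simp [hmid]; linarith [hc'.2, hc.2]⟩
    have hsplit : ∫ x in c'..c, ΔF x = (∫ x in c'..mid, ΔF x) + ∫ x in mid..c, ΔF x :=
      (intervalIntegral.integral_add_adjacent_intervals (hInt _ _ hc' hmid1) (hInt _ _ hmid1 hc)).symm
    have hsub1 : Icc c' mid ⊆ Icc (0:ℝ) 1 := Icc_subset_Icc hc'.1 hmid1.2
    have hsub2 : Icc mid c ⊆ Icc (0:ℝ) 1 := Icc_subset_Icc hmid1.1 hc.2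
    have h1 : ∫ x in c'..mid, ΔF x ≤ ∫ x in c'..mid, (m + L * (x - c')) := by
      apply intervalIntegral.integral_mono_on (by simp only [hmid]; linarith)
      · exact (hInt _ _ hc' hmid1)
      · exact ((continuous_const.add (continuous_const.mul (continuous_id.sub continuous_const))).intervalIntegrable _ _)
      · intro x hx
        have hx1 : x ∈ Icc (0:ℝ) 1 := hsub1 hx
        have := hlip x hx1 c' hc'
        rw [abs_le] at this
        have habs : |x - c'| = x - c' := abs_of_nonneg (by linarith [hx.1])
        rw [habs] at this
        linarith [this.2]
    have h2 : ∫ x in mid..c, ΔF x ≤ ∫ x in mid..c, (m + L * (c - x)) := by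
      apply intervalIntegral.integral_mono_on (by simp only [hmid]; linarith)
      · exact (hInt _ _ hmid1 hc)
      · exact ((continuous_const.add (continuous_const.mul (continuous_const.sub continuous_id))).intervalIntegrable _ _)
      · intro x hx
        have hx1 : x ∈ Icc (0:ℝ) 1 := hsub2 hx
        have := hlip x hx1 c hc
        rw [abs_le] at this
        have habs : |x - c| = c - x := by
          rw [abs_of_nonpos (by linarith [hx.2])]; ring
        rw [habs] at this
        linarith [this.2]
    rw [hsplit]
    have e1 := haff c' mid m L
    have e2 := haff' mid c m L
    rw [e1] at h1; rw [e2] at h2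
    rw [hmid] at h1 h2
    nlinarith [h1, h2]
  -- main bound with slack δ
  have main : ∀ δ : ℝ, 0 < δ → ∫ x in (0:ℝ)..1, ΔF x ≤ m + ε*L/2 + δ := by
    intro δ hδ
    set η := δ / (L + 1) with hηdef
    have hη : 0 < η := div_pos hδ (by linarith)
    have hLη : L * η ≤ δ := by
      rw [hηdef, ← mul_div_assoc, div_le_iff₀ (show (0:ℝ) < L+1 by linarith)]
      nlinarith
    have ind : ∀ n : ℕ, ∀ c, c ∈ Icc (0:ℝ) 1 → ΔF c ≤ m → c ≤ n * η →
        ∫ x in (0:ℝ)..c, ΔF x ≤ (m + ε*L/2 + δ) * c := by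
      intro n
      induction n with
      | zero =>
        intro c hc hΔ hcn
        have : c = 0 := le_antisymm (by simpa using hcn) hc.1
        subst this
        simp
      | succ n ih =>
        intro c hc hΔ hcn
        by_cases hcase : c ≤ ε + η
        · -- direct tent from right endpoint
          have h1 : ∫ x in (0:ℝ)..c, ΔF x ≤ ∫ x in (0:ℝ)..c, (m + L * (c - x)) := by
            apply intervalIntegral.integral_mono_on hc.1
            · exact hInt _ _ h01 hc
            · exact ((continuous_const.add (continuous_const.mul (continuous_const.sub continuous_id))).intervalIntegrable _ _)
            · intro x hx
              have hx1 : x ∈ Icc (0:ℝ) 1 := Icc_subset_Icc le_rfl hc.2 hx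
              have := hlip x hx1 c hc
              rw [abs_le] at this
              have habs : |x - c| = c - x := by
                rw [abs_of_nonpos (by linarith [hx.2])]; ring
              rw [habs] at this
              linarith [this.2]
          have e := haff' 0 c m L
          rw [e] at h1
          have hc0 : 0 ≤ c := hc.1
          nlinarith [h1, mul_nonneg hL0 (mul_nonneg (sub_nonneg.2 hcase) hc0),
            mul_nonneg (sub_nonneg.2 hLη) hc0, mul_nonneg hδ.le hc0]
        · -- recursive step
          push_neg at hcase
          have hy₀ : c - ε - η ∈ Icc (0:ℝ) 1 := ⟨by linarith, by linarith [hc.2, hε.le, hη.le]⟩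
          obtain ⟨c', hc', hdist, hΔc'⟩ := key _ hy₀
          rw [abs_le] at hdist
          have h1 : c' ≤ c - η := by linarith [hdist.2]
          have h2 : c - c' ≤ 2*ε + η := by linarith [hdist.1]
          have hcc' : c' ≤ c := by linarith
          have ihc' := ih c' hc' hΔc' (by push_cast at hcn ⊢; linarith)
          have hsplit : ∫ x in (0:ℝ)..c, ΔF x = (∫ x in (0:ℝ)..c', ΔF x) + ∫ x in c'..c, ΔF x :=
            (intervalIntegral.integral_add_adjacent_intervals (hInt _ _ h01 hc') (hInt _ _ hc' hc)).symm
          have htent := tent c' c hc' hc hcc' hΔc' hΔ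
          rw [hsplit]
          have hquad : L*(c-c')^2/4 ≤ (ε*L/2 + δ)*(c-c') := by
            nlinarith [mul_nonneg hL0 (mul_nonneg (sub_nonneg.2 h2) (sub_nonneg.2 hcc')),
              mul_nonneg (sub_nonneg.2 hLη) (sub_nonneg.2 hcc'),
              mul_nonneg hδ.le (sub_nonneg.2 hcc')]
          nlinarith [ihc', htent, hquad]
    obtain ⟨n, hn⟩ := exists_nat_ge (1/η)
    have h1n : (1:ℝ) ≤ n * η := by
      rw [div_le_iff₀ hη] at hn
      linarith
    have := ind n 1 h11 (by rw [hone]; exact hm0) h1n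
    linarith [this]
  -- conclude
  have final : ∫ x in (0:ℝ)..1, ΔF x ≤ m + ε*L/2 := by
    refine le_of_forall_pos_le_add (fun δ hδ => ?_)
    linarith [main δ hδ]
  linarith [final]
end

section
/- Let G : [0,1] → ℝ≥0 be a step function with jumps only at finitely many points, and define M̂(ε) = max_{y₀∈[0,1]} min_{|ŷ−y₀|≤ε, ŷ∈[0,1]} G(ŷ) for ε > 0. For a step size δ = ε/K with K ∈ ℕ₊, define the grid approximation M̃(ε;K) = max{ min_{0≤j≤K} G(jδ), max_{1≤j≤⌈1/δ⌉−2K} min_{j≤k≤j+2K−1} G(kδ) }. Then M̃(ε;K) ≥ M̂(ε). -/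
open Set

theorem approx_mcdp_overestimates
    (G : ℝ → ℝ)
    (hnonneg : ∀ x ∈ Icc (0:ℝ) 1, 0 ≤ G x)
    (hG1 : G 1 = 0)
    (P : Finset ℝ)
    (hstep : ∀ x ∈ Icc (0:ℝ) 1, ∀ z ∈ Icc (0:ℝ) 1, x ≤ z →
      (∀ p ∈ P, ¬(x < p ∧ p ≤ z)) → G x = G z)
    (ε : ℝ) (hε : 0 < ε) (K : ℕ) (hK : 0 < K)
    (Mhat : ℝ)
    (hMhat : Mhat = ⨆ y₀ : Icc (0:ℝ) 1,
      ⨅ yh : {y : Icc (0:ℝ) 1 // |y.1 - y₀.1| ≤ ε}, G yh.1.1)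
    (hne : (Finset.Icc (1:ℤ) (⌈(1:ℝ) / (ε / K)⌉ - 2 * K)).Nonempty) :
    Mhat ≤ max
      (Finset.inf' (Finset.range (K + 1)) ⟨0, by simp⟩
        (fun j => G (j * (ε / K))))
      (Finset.sup' (Finset.Icc (1:ℤ) (⌈(1:ℝ) / (ε / K)⌉ - 2 * K)) hne
        (fun j => Finset.inf' (Finset.Icc j (j + 2 * K - 1))
          (Finset.nonempty_Icc.mpr (by omega))
          (fun k => G (k * (ε / K))))) := by
  have hKR : (0:ℝ) < K := by exact_mod_cast hK
  set δ : ℝ := ε / K with hδdef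
  have hδ : 0 < δ := div_pos hε hKR
  -- From nonemptiness, ε < 1/2
  obtain ⟨j₀, hj₀⟩ := hne
  rw [Finset.mem_Icc] at hj₀
  have hceil : (2 * K : ℤ) < ⌈(1:ℝ) / δ⌉ := by omega
  have h2K : (2 * K : ℝ) < 1 / δ := by exact_mod_cast Int.lt_ceil.mp hceil
  have hKδ : (K : ℝ) * δ = ε := by rw [hδdef, mul_div_cancel₀ _ hKR.ne']
  have hεhalf : ε < 1 / 2 := by
    have h1 : (2 * K : ℝ) * δ < 1 := by
      rw [lt_div_iff₀ hδ] at h2K; linarith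
    have : 2 * ε < 1 := by
      calc 2 * ε = (2 * K : ℝ) * δ := by rw [hδdef]; field_simp
      _ < 1 := h1
    linarith
  subst hMhat
  haveI : Nonempty ↑(Icc (0:ℝ) 1) := ⟨⟨0, by norm_num⟩⟩
  refine ciSup_le fun y₀ => ?_
  haveI : Nonempty {y : Icc (0:ℝ) 1 // |y.1 - y₀.1| ≤ ε} :=
    ⟨⟨y₀, by rw [sub_self, abs_zero]; exact hε.le⟩⟩
  have hbd : BddBelow (Set.range fun yh : {y : Icc (0:ℝ) 1 // |y.1 - y₀.1| ≤ ε} => G yh.1.1) := by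
    refine ⟨0, ?_⟩
    rintro x ⟨yh, rfl⟩
    exact hnonneg _ yh.1.2
  obtain ⟨hy₀0, hy₀1⟩ := y₀.2
  rcases le_or_gt (1 - ε) y₀.1 with hA | hA
  · -- y₀ ≥ 1 - ε : use ŷ = 1, G 1 = 0, and RHS ≥ 0
    have h1mem : (1:ℝ) ∈ Icc (0:ℝ) 1 := by norm_num
    have habs : |(⟨1, h1mem⟩ : Icc (0:ℝ) 1).1 - y₀.1| ≤ ε := by
      rw [abs_le]; constructor <;> simp <;> linarith
    have hinf0 : (⨅ yh : {y : Icc (0:ℝ) 1 // |y.1 - y₀.1| ≤ ε}, G yh.1.1) ≤ 0 := by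
      have := ciInf_le hbd (⟨⟨1, h1mem⟩, habs⟩ : {y : Icc (0:ℝ) 1 // |y.1 - y₀.1| ≤ ε})
      simpa [hG1] using this
    refine hinf0.trans (le_max_of_le_left ?_)
    refine Finset.le_inf' _ _ fun j hj => ?_
    rw [Finset.mem_range] at hj
    have hjK : (j : ℝ) ≤ K := by exact_mod_cast Nat.lt_succ_iff.mp hj
    refine hnonneg _ ⟨by positivity, ?_⟩
    have : (j : ℝ) * δ ≤ (K : ℝ) * δ := by nlinarith
    rw [hKδ] at this; linarith
  rcases le_or_gt y₀.1 ε with hB | hB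
  · -- y₀ ≤ ε : left component
    refine le_trans ?_ (le_max_left _ _)
    refine Finset.le_inf' _ _ fun j hj => ?_
    rw [Finset.mem_range] at hj
    have hjK : (j : ℝ) ≤ K := by exact_mod_cast Nat.lt_succ_iff.mp hj
    have hjδε : (j : ℝ) * δ ≤ ε := by
      have : (j : ℝ) * δ ≤ (K : ℝ) * δ := by nlinarith
      rwa [hKδ] at this
    have hmem : (j : ℝ) * δ ∈ Icc (0:ℝ) 1 := ⟨by positivity, by linarith⟩
    have habs : |((⟨(j:ℝ) * δ, hmem⟩ : Icc (0:ℝ) 1)).1 - y₀.1| ≤ ε := by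
      rw [abs_le]; constructor <;> simp
      · nlinarith [hδ.le, Nat.cast_nonneg (α := ℝ) j]
      · linarith
    exact ciInf_le hbd (⟨⟨(j:ℝ) * δ, hmem⟩, habs⟩ : {y : Icc (0:ℝ) 1 // |y.1 - y₀.1| ≤ ε})
  · -- ε < y₀ < 1 - ε : right component with j = ⌈(y₀ - ε)/δ⌉
    set j : ℤ := ⌈(y₀.1 - ε) / δ⌉ with hjdef
    have hjlb : (y₀.1 - ε) / δ ≤ (j : ℝ) := Int.le_ceil _
    have hjub : (j : ℝ) < (y₀.1 - ε) / δ + 1 := Int.ceil_lt_add_one _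
    have hj1 : 1 ≤ j := by
      rw [hjdef]
      exact Int.ceil_pos.mpr (div_pos (by linarith) hδ)
    have h2Kδ : (2 * K : ℝ) * δ = 2 * ε := by
      linear_combination 2 * hKδ
    have hsum : (y₀.1 - ε) / δ + 2 * K = (y₀.1 + ε) / δ := by
      field_simp
      linarith [h2Kδ]
    have hjtop : j ≤ ⌈(1:ℝ) / δ⌉ - 2 * K := by
      have hle1 : (y₀.1 + ε) / δ ≤ 1 / δ := by gcongr <;> linarith
      have hceil' : (1:ℝ) / δ ≤ (⌈(1:ℝ) / δ⌉ : ℝ) := Int.le_ceil _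
      have hrr : ((j + 2 * K : ℤ) : ℝ) < ((⌈(1:ℝ) / δ⌉ + 1 : ℤ) : ℝ) := by
        push_cast
        linarith
      have : j + 2 * K < ⌈(1:ℝ) / δ⌉ + 1 := by exact_mod_cast hrr
      omega
    have hjmem : j ∈ Finset.Icc (1:ℤ) (⌈(1:ℝ) / δ⌉ - 2 * K) :=
      Finset.mem_Icc.mpr ⟨hj1, hjtop⟩
    refine le_max_of_le_right (le_trans ?_ (Finset.le_sup' _ hjmem))
    refine Finset.le_inf' _ _ fun k hk => ?_
    rw [Finset.mem_Icc] at hk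
    have hkl : (j : ℝ) ≤ (k : ℝ) := by exact_mod_cast hk.1
    have hku : (k : ℝ) ≤ (j : ℝ) + 2 * K - 1 := by
      have := hk.2
      have : (k : ℝ) ≤ ((j + 2 * K - 1 : ℤ) : ℝ) := by exact_mod_cast this
      push_cast at this
      linarith
    have hlow : y₀.1 - ε ≤ (k : ℝ) * δ := by
      have h1 : (y₀.1 - ε) / δ ≤ (k : ℝ) := le_trans hjlb hkl
      rw [div_le_iff₀ hδ] at h1
      linarith [h1]
    have hhigh : (k : ℝ) * δ < y₀.1 + ε := by
      have h1 : (k : ℝ) < (y₀.1 + ε) / δ := by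
        calc (k : ℝ) ≤ (j : ℝ) + 2 * K - 1 := hku
        _ < (y₀.1 - ε) / δ + 2 * K := by linarith
        _ = (y₀.1 + ε) / δ := hsum
      rw [lt_div_iff₀ hδ] at h1
      linarith
    have hmem : (k : ℝ) * δ ∈ Icc (0:ℝ) 1 := ⟨by linarith, by linarith⟩
    have habs : |((⟨(k:ℝ) * δ, hmem⟩ : Icc (0:ℝ) 1)).1 - y₀.1| ≤ ε := by
      rw [abs_le]
      constructor <;> simp <;> linarith
    exact ciInf_le hbd (⟨⟨(k:ℝ) * δ, hmem⟩, habs⟩ : {y : Icc (0:ℝ) 1 // |y.1 - y₀.1| ≤ ε})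
end

section
/- For integers p > q ≥ 0 and ε > 0, and for each j_p ∈ {1,...,⌈2^p/ε⌉ − 2·2^p}, setting j_q = ⌈j_p · 2^{q−p}⌉ gives j_q ∈ {1,...,⌈2^q/ε⌉ − 2·2^q}, and the grid set {(j_q + l)·ε/2^q : l = 0,...,2·2^q − 1} is a subset of the grid set {(j_p + l)·ε/2^p : l = 0,...,2·2^p − 1}. -/
theorem grid_subset_mono
    (p q : ℕ) (hq : q < p) (ε : ℝ) (hε : 0 < ε)
    (jp : ℤ) (hjp1 : 1 ≤ jp)
    (hjp2 : jp ≤ ⌈(2 ^ p : ℝ) / ε⌉ - 2 * 2 ^ p) :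
    1 ≤ ⌈(jp : ℝ) * 2 ^ q / 2 ^ p⌉ ∧
    ⌈(jp : ℝ) * 2 ^ q / 2 ^ p⌉ ≤ ⌈(2 ^ q : ℝ) / ε⌉ - 2 * 2 ^ q ∧
    {x : ℝ | ∃ l : ℕ, l ≤ 2 * 2 ^ q - 1 ∧
        x = ((⌈(jp : ℝ) * 2 ^ q / 2 ^ p⌉ : ℝ) + l) * (ε / 2 ^ q)} ⊆
      {x : ℝ | ∃ l : ℕ, l ≤ 2 * 2 ^ p - 1 ∧
        x = ((jp : ℝ) + l) * (ε / 2 ^ p)} := by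
  set m : ℤ := 2 ^ (p - q) with hm_def
  have hmR : (m : ℝ) = 2 ^ (p - q) := by rw [hm_def]; push_cast; ring
  have hm0 : (0 : ℝ) < (m : ℝ) := by rw [hmR]; positivity
  have hm0Z : (0 : ℤ) < m := by rw [hm_def]; positivity
  have hpq : (2 : ℝ) ^ q * (m : ℝ) = 2 ^ p := by
    rw [hmR, ← pow_add]; congr 1; omega
  have hZpq : (2 : ℤ) ^ q * m = 2 ^ p := by
    rw [hm_def, ← pow_add]; congr 1; omega
  have hdiv : (jp : ℝ) * 2 ^ q / 2 ^ p = (jp : ℝ) / m := by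
    rw [← hpq]; field_simp
  set jq : ℤ := ⌈(jp : ℝ) * 2 ^ q / 2 ^ p⌉ with hjq_def
  have hjpR : (1 : ℝ) ≤ (jp : ℝ) := by exact_mod_cast hjp1
  have hjq1 : 1 ≤ jq := by
    have : 0 < jq := Int.ceil_pos.2 (by rw [hdiv]; positivity)
    omega
  -- jp ≤ jq * m
  have hjq_div : jq = ⌈(jp : ℝ) / m⌉ := by rw [hjq_def, hdiv]
  have h_le : (jp : ℝ) ≤ (jq : ℝ) * m := by
    have h := Int.le_ceil ((jp : ℝ) / m)
    rw [div_le_iff₀ hm0, ← hjq_div] at h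
    exact h
  have hZle : jp ≤ jq * m := by exact_mod_cast h_le
  -- jq * m ≤ jp + m - 1
  have h_lt : (jq : ℝ) * m < (jp : ℝ) + m := by
    have h := Int.ceil_lt_add_one ((jp : ℝ) / m)
    rw [← hjq_div] at h
    have h2 := mul_lt_mul_of_pos_right h hm0
    calc (jq : ℝ) * m < ((jp : ℝ) / m + 1) * m := h2
      _ = (jp : ℝ) + m := by field_simp
  have hZlt : jq * m < jp + m := by exact_mod_cast h_lt
  have hZ2 : jq * m ≤ jp + m - 1 := by omega
  -- second bound
  have hjpR2 : (jp : ℝ) ≤ (⌈(2 ^ p : ℝ) / ε⌉ : ℝ) - 2 * 2 ^ p := by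
    have h : ((jp : ℤ) : ℝ) ≤ ((⌈(2 ^ p : ℝ) / ε⌉ - 2 * 2 ^ p : ℤ) : ℝ) := by
      exact_mod_cast hjp2
    push_cast at h
    linarith
  have hA : (⌈(2 ^ p : ℝ) / ε⌉ : ℝ) < (2 : ℝ) ^ p / ε + 1 := Int.ceil_lt_add_one _
  have hB : (2 : ℝ) ^ p / ε = ((2 : ℝ) ^ q / ε) * m := by
    rw [← hpq]; ring
  have hZ2R : (jq : ℝ) * m ≤ (jp : ℝ) + m - 1 := by exact_mod_cast hZ2
  have key : ((jq : ℝ) + 2 * 2 ^ q - 1) < (2 : ℝ) ^ q / ε := by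
    have h5 : ((jq : ℝ) + 2 * 2 ^ q - 1) * m < ((2 : ℝ) ^ q / ε) * m := by
      nlinarith [hZ2R, hjpR2, hA, hB, hpq]
    exact lt_of_mul_lt_mul_right h5 hm0.le
  have hjq2 : jq ≤ ⌈(2 ^ q : ℝ) / ε⌉ - 2 * 2 ^ q := by
    have h : jq + 2 * 2 ^ q - 1 < ⌈(2 ^ q : ℝ) / ε⌉ := by
      rw [Int.lt_ceil]
      push_cast
      linarith [key]
    omega
  refine ⟨hjq1, hjq2, ?_⟩
  rintro x ⟨l, hl, hx⟩
  have h2q1 : (1 : ℕ) ≤ 2 * 2 ^ q := Nat.one_le_iff_ne_zero.mpr (by positivity)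
  have h2p1 : (1 : ℕ) ≤ 2 * 2 ^ p := Nat.one_le_iff_ne_zero.mpr (by positivity)
  have hlZ : (l : ℤ) ≤ 2 * 2 ^ q - 1 := by
    have h := (Nat.cast_le (α := ℤ)).2 hl
    rw [Nat.cast_sub h2q1] at h
    push_cast at h
    linarith
  have hlm : (0 : ℤ) ≤ (l : ℤ) * m := mul_nonneg (by positivity) hm0Z.le
  have hnn : (0 : ℤ) ≤ jq * m - jp + l * m := by linarith [hZle]
  have hbound : jq * m - jp + l * m ≤ 2 * 2 ^ p - 1 := by
    have h1 : (l : ℤ) * m ≤ (2 * 2 ^ q - 1) * m := mul_le_mul_of_nonneg_right hlZ hm0Z.le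
    nlinarith [hZpq, hZ2]
  refine ⟨(jq * m - jp + l * m).toNat, ?_, ?_⟩
  · rw [Int.toNat_le, Nat.cast_sub h2p1]
    push_cast
    linarith [hbound]
  · have hcast : (((jq * m - jp + l * m).toNat : ℕ) : ℝ)
        = (jq : ℝ) * m - jp + l * m := by
      have h := Int.toNat_of_nonneg hnn
      have h2 : (((jq * m - jp + l * m).toNat : ℤ) : ℝ)
          = ((jq * m - jp + l * m : ℤ) : ℝ) := by exact_mod_cast h
      push_cast at h2
      push_cast
      linarith [h2]
    rw [hx, hcast]
    rw [← hpq]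
    have hq0 : (2 : ℝ) ^ q ≠ 0 := by positivity
    have hm0' : (m : ℝ) ≠ 0 := ne_of_gt hm0
    field_simp
    ring
end
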